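/- arXiv:1810.12167 — 3 statements merged into one kernel-verified Lean document; each statement's English description precedes it below -/
import Mathlib

section
/- Under the stated approximation hypotheses, the controllability maps converge strongly: for every f ∈ L²((0,T),U), one has ‖𝓑_n^T f − 𝓑^T f‖_H → 0 as n → ∞. -/
/-!
Banach–Steinhaus bounds `‖Bn n‖` uniformly, so the integrands `s ↦ Sn n (T - s) (Bn n (f s))` are
dominated by `e^{|a| T} C ‖f s‖`, which is integrable because `L² ⊆ L¹` on a bounded interval.
A uniformly bounded, strongly convergent sequence of operators applied to a convergent sequence of
vectors converges, so the integrands converge pointwise, and dominated convergence concludes.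
The same boundedness makes a strongly continuous family jointly continuous in time and vector,
which gives the measurability of the integrands.
-/

open MeasureTheory Set Filter
open scoped Topology

section OperatorFamilies

variable {𝕜 E F : Type*} [NontriviallyNormedField 𝕜]
  [NormedAddCommGroup E] [NormedSpace 𝕜 E] [NormedAddCommGroup F] [NormedSpace 𝕜 F]

theorem exists_norm_le_of_tendsto_apply [CompleteSpace E] {A : ℕ → E →L[𝕜] F} {A₀ : E → F}
    (hA : ∀ v, Tendsto (fun n => A n v) atTop (𝓝 (A₀ v))) : ∃ C, ∀ n, ‖A n‖ ≤ C :=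
  banach_steinhaus fun v => by
    obtain ⟨C, hC⟩ := (hA v).norm.bddAbove_range
    exact ⟨C, fun n => hC ⟨n, rfl⟩⟩

theorem tendsto_clm_apply_of_eventually_norm_le {ι : Type*} {l : Filter ι}
    {A : ι → E →L[𝕜] F} {x : ι → E} {x₀ : E} {y : F} {C : ℝ}
    (hA : ∀ᶠ i in l, ‖A i‖ ≤ C) (hAx₀ : Tendsto (fun i => A i x₀) l (𝓝 y))
    (hx : Tendsto x l (𝓝 x₀)) : Tendsto (fun i => A i (x i)) l (𝓝 y) := by
  have hsub : Tendsto (fun i => A i (x i - x₀)) l (𝓝 0) := by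
    refine squeeze_zero_norm' ?_
      (by simpa using (tendsto_iff_norm_sub_tendsto_zero.1 hx).const_mul C)
    filter_upwards [hA] with i hi
    exact (A i).le_of_opNorm_le hi _
  simpa using hsub.add hAx₀

theorem continuousOn_clm_apply_of_norm_le {X : Type*} [TopologicalSpace X]
    {R : X → E →L[𝕜] F} {s : Set X} {C : ℝ}
    (hR : ∀ v, ContinuousOn (fun t => R t v) s) (hC : ∀ t ∈ s, ‖R t‖ ≤ C) :
    ContinuousOn (fun p : X × E => R p.1 p.2) (s ×ˢ univ) := by
  rintro ⟨t, v⟩ ⟨ht, -⟩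
  refine tendsto_clm_apply_of_eventually_norm_le (x₀ := v) (C := C) ?_ ?_ ?_
  · filter_upwards [self_mem_nhdsWithin] with p hp using hC _ hp.1
  · exact (hR v t ht).tendsto.comp
      (continuousWithinAt_fst.tendsto_nhdsWithin fun p hp => hp.1)
  · exact continuousWithinAt_snd

theorem aestronglyMeasurable_clm_apply_of_norm_le {α : Type*} [MeasurableSpace α]
    {μ : Measure α} {R : ℝ → E →L[𝕜] F} {p q C : ℝ} (hpq : p ≤ q)
    (hR : ∀ v, ContinuousOn (fun t => R t v) (Icc p q)) (hC : ∀ t ∈ Icc p q, ‖R t‖ ≤ C)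
    {τ : α → ℝ} {g : α → E} (hτ : AEStronglyMeasurable τ μ) (hτ_mem : ∀ᵐ a ∂μ, τ a ∈ Icc p q)
    (hg : AEStronglyMeasurable g μ) : AEStronglyMeasurable (fun a => R (τ a) (g a)) μ := by
  have hclamp : Continuous fun y : ℝ × E => ((projIcc p q hpq y.1 : ℝ), y.2) := by fun_prop
  have hclamped : Continuous fun y : ℝ × E => R (projIcc p q hpq y.1) y.2 :=
    (continuousOn_clm_apply_of_norm_le hR hC).comp_continuous hclamp
      fun y => ⟨Subtype.mem _, mem_univ _⟩
  refine (hclamped.comp_aestronglyMeasurable (hτ.prodMk hg)).congr ?_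
  filter_upwards [hτ_mem] with a ha
  simp [projIcc_of_mem hpq ha]

theorem tendsto_setIntegral_Ioo_clm_apply_sub [NormedSpace ℝ F]
    {A : ℕ → ℝ → E →L[𝕜] F} {A₀ : ℝ → E →L[𝕜] F} {T C : ℝ} (hT : 0 ≤ T)
    (hA_cont : ∀ n v, ContinuousOn (fun t => A n t v) (Icc 0 T))
    (hA_le : ∀ n, ∀ t ∈ Icc 0 T, ‖A n t‖ ≤ C)
    (hA_tendsto : ∀ t ∈ Ioo 0 T, ∀ v, Tendsto (fun n => A n t v) atTop (𝓝 (A₀ t v)))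
    {f : ℝ → E} (hf : Integrable f (volume.restrict (Ioo 0 T))) :
    Tendsto (fun n => ∫ s in Ioo 0 T, A n (T - s) (f s)) atTop
      (𝓝 (∫ s in Ioo 0 T, A₀ (T - s) (f s))) := by
  have hmem : ∀ᵐ s ∂(volume.restrict (Ioo 0 T)), T - s ∈ Ioo 0 T := by
    filter_upwards [ae_restrict_mem measurableSet_Ioo] with s hs
    exact ⟨by linarith [hs.2], by linarith [hs.1]⟩
  refine tendsto_integral_of_dominated_convergence (fun s => C * ‖f s‖) (fun n => ?_)
    (hf.norm.const_mul C) (fun n => ?_) ?_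
  · exact aestronglyMeasurable_clm_apply_of_norm_le hT (hA_cont n) (hA_le n)
      (measurable_const.sub measurable_id).aestronglyMeasurable
      (hmem.mono fun s hs => Ioo_subset_Icc_self hs) hf.aestronglyMeasurable
  · filter_upwards [hmem] with s hs
    exact (A n _).le_of_opNorm_le (hA_le n _ (Ioo_subset_Icc_self hs)) _
  · filter_upwards [hmem] with s hs using hA_tendsto _ hs _

end OperatorFamilies

theorem controllability_maps_converge_strongly_general
    {H U : Type*}
    [NormedAddCommGroup H] [InnerProductSpace ℂ H]
    [NormedAddCommGroup U] [InnerProductSpace ℂ U] [CompleteSpace U]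
    (a T : ℝ) (hT : 0 < T)
    (S : ℝ → H →L[ℂ] H) (Sn : ℕ → ℝ → H →L[ℂ] H)
    (hSncont : ∀ n, ∀ x : H, ContinuousOn (fun t => Sn n t x) (Ici (0:ℝ)))
    (hSnbound : ∀ n, ∀ t : ℝ, 0 ≤ t → ‖Sn n t‖ ≤ Real.exp (-(t * a)))
    (hSconv : ∀ t : ℝ, 0 < t → ∀ x : H,
      Tendsto (fun n => Sn n t x) atTop (nhds (S t x)))
    (B : U →L[ℂ] H) (Bn : ℕ → U →L[ℂ] H)
    (hBconv : ∀ v : U, Tendsto (fun n => Bn n v) atTop (nhds (B v)))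
    (𝓑T : Lp U 2 (volume.restrict (Ioo (0:ℝ) T)) →L[ℂ] H)
    (h𝓑T : ∀ f : Lp U 2 (volume.restrict (Ioo (0:ℝ) T)),
      𝓑T f = ∫ s in Ioo (0:ℝ) T, S (T - s) (B (f s)))
    (𝓑Tn : ℕ → (Lp U 2 (volume.restrict (Ioo (0:ℝ) T)) →L[ℂ] H))
    (h𝓑Tn : ∀ n, ∀ f : Lp U 2 (volume.restrict (Ioo (0:ℝ) T)),
      𝓑Tn n f = ∫ s in Ioo (0:ℝ) T, Sn n (T - s) (Bn n (f s))) :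
    ∀ f : Lp U 2 (volume.restrict (Ioo (0:ℝ) T)),
      Tendsto (fun n => ‖𝓑Tn n f - 𝓑T f‖) atTop (nhds 0) := by
  intro f
  obtain ⟨Cb, hCb⟩ := exists_norm_le_of_tendsto_apply hBconv
  have hSn_le : ∀ n, ∀ t ∈ Icc 0 T, ‖Sn n t‖ ≤ Real.exp (|a| * T) := fun n t ht =>
    (hSnbound n t ht.1).trans <| Real.exp_le_exp.2 <| by
      nlinarith [neg_abs_le a, abs_nonneg a, ht.1, ht.2]
  have hA_le : ∀ n, ∀ t ∈ Icc 0 T, ‖(Sn n t).comp (Bn n)‖ ≤ Real.exp (|a| * T) * Cb :=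
    fun n t ht => (ContinuousLinearMap.opNorm_comp_le _ _).trans <|
      mul_le_mul (hSn_le n t ht) (hCb n) (norm_nonneg _) (Real.exp_pos _).le
  have hf : Integrable f (volume.restrict (Ioo 0 T)) := (Lp.memLp f).integrable one_le_two
  have hA_tendsto : ∀ t ∈ Ioo 0 T, ∀ v,
      Tendsto (fun n => Sn n t (Bn n v)) atTop (𝓝 (S t (B v))) := fun t ht v =>
    tendsto_clm_apply_of_eventually_norm_le
      (Eventually.of_forall fun n => hSn_le n t (Ioo_subset_Icc_self ht))
      (hSconv t ht.1 (B v)) (hBconv v)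
  have hlim := tendsto_setIntegral_Ioo_clm_apply_sub
    (A := fun n t => (Sn n t).comp (Bn n)) (A₀ := fun t => (S t).comp B) hT.le
    (fun n v => (hSncont n (Bn n v)).mono Icc_subset_Ici_self) hA_le hA_tendsto hf
  simp_rw [h𝓑Tn, h𝓑T]
  exact tendsto_iff_norm_sub_tendsto_zero.1 hlim

theorem controllability_maps_converge_strongly
    {H U : Type*}
    [NormedAddCommGroup H] [InnerProductSpace ℂ H] [CompleteSpace H]
    [NormedAddCommGroup U] [InnerProductSpace ℂ U] [CompleteSpace U]
    (a T : ℝ) (hT : 0 < T)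
    (S : ℝ → H →L[ℂ] H) (Sn : ℕ → ℝ → H →L[ℂ] H)
    (hS0 : S 0 = 1)
    (hSsemi : ∀ t s : ℝ, 0 ≤ t → 0 ≤ s → S (t + s) = (S t).comp (S s))
    (hScont : ∀ x : H, ContinuousOn (fun t => S t x) (Ici (0:ℝ)))
    (hSbound : ∀ t : ℝ, 0 ≤ t → ‖S t‖ ≤ Real.exp (-(t * a)))
    (hSn0 : ∀ n, Sn n 0 = 1)
    (hSnsemi : ∀ n, ∀ t s : ℝ, 0 ≤ t → 0 ≤ s →
      Sn n (t + s) = (Sn n t).comp (Sn n s))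
    (hSncont : ∀ n, ∀ x : H, ContinuousOn (fun t => Sn n t x) (Ici (0:ℝ)))
    (hSnbound : ∀ n, ∀ t : ℝ, 0 ≤ t → ‖Sn n t‖ ≤ Real.exp (-(t * a)))
    (hSconv : ∀ t : ℝ, 0 < t → ∀ x : H,
      Tendsto (fun n => Sn n t x) atTop (nhds (S t x)))
    (B : U →L[ℂ] H) (Bn : ℕ → U →L[ℂ] H)
    (hBconv : ∀ v : U, Tendsto (fun n => Bn n v) atTop (nhds (B v)))
    (hBadjconv : ∀ x : H,
      Tendsto (fun n => ContinuousLinearMap.adjoint (Bn n) x) atTop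
        (nhds (ContinuousLinearMap.adjoint B x)))
    (𝓑T : Lp U 2 (volume.restrict (Ioo (0:ℝ) T)) →L[ℂ] H)
    (h𝓑T : ∀ f : Lp U 2 (volume.restrict (Ioo (0:ℝ) T)),
      𝓑T f = ∫ s in Ioo (0:ℝ) T, S (T - s) (B (f s)))
    (𝓑Tn : ℕ → (Lp U 2 (volume.restrict (Ioo (0:ℝ) T)) →L[ℂ] H))
    (h𝓑Tn : ∀ n, ∀ f : Lp U 2 (volume.restrict (Ioo (0:ℝ) T)),
      𝓑Tn n f = ∫ s in Ioo (0:ℝ) T, Sn n (T - s) (Bn n (f s))) :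
    ∀ f : Lp U 2 (volume.restrict (Ioo (0:ℝ) T)),
      Tendsto (fun n => ‖𝓑Tn n f - 𝓑T f‖) atTop (nhds 0) :=
  controllability_maps_converge_strongly_general a T hT S Sn hSncont hSnbound hSconv B Bn hBconv 𝓑T
    h𝓑T 𝓑Tn h𝓑Tn
end

section
/- Let H₁, H₂, H₃ be Hilbert spaces and X : H₁ → H₃, Y : H₂ → H₃ bounded linear operators. Then the following are equivalent: (a) Ran X ⊆ Ran Y; (b) there is c > 0 such that ‖X* z‖ ≤ c ‖Y* z‖ for all z ∈ H₃; (c) there is a bounded linear operator Z : H₁ → H₂ with X = Y ∘ Z. -/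
open Set
open scoped InnerProductSpace

/-!
Douglas' lemma. If `ran X ⊆ ran Y`, then `Y` restricted to `(ker Y)ᗮ` is injective with the same
range, so `Z := Y⁻¹ X` is a well-defined linear map with closed graph, hence bounded. If `X = Y Z`,
then `X† = Z† Y†` gives the norm estimate with `c = ‖Z‖ + 1`. Conversely, given the estimate and
`x`, the functional `Y† z ↦ ⟪X x, z⟫` is well defined and bounded on `ran Y†`; a Hahn–Banach
extension of it is represented by a vector `w`, and then `⟪Y w, z⟫ = ⟪X x, z⟫` for all `z`.
-/

theorem LinearMap.exists_comp_rangeRestrict_eq_of_ker_le {R M N P : Type*} [Ring R]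
    [AddCommGroup M] [Module R M] [AddCommGroup N] [Module R N] [AddCommGroup P] [Module R P]
    (f : M →ₗ[R] N) (g : M →ₗ[R] P) (h : LinearMap.ker f ≤ LinearMap.ker g) :
    ∃ φ : LinearMap.range f →ₗ[R] P, ∀ x, φ (f.rangeRestrict x) = g x :=
  ⟨(LinearMap.ker f).liftQ g h ∘ₗ f.quotKerEquivRange.symm.toLinearMap, fun x => by
    simp [LinearMap.rangeRestrict, LinearMap.codRestrict, f.quotKerEquivRange_symm_apply_image]⟩

theorem LinearMap.exists_strongDual_comp_eq_of_norm_le {𝕜 E F : Type*} [RCLike 𝕜]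
    [AddCommGroup E] [Module 𝕜 E] [NormedAddCommGroup F] [NormedSpace 𝕜 F]
    (f : E →ₗ[𝕜] F) (g : E →ₗ[𝕜] 𝕜) (C : ℝ) (h : ∀ x, ‖g x‖ ≤ C * ‖f x‖) :
    ∃ φ : StrongDual 𝕜 F, ∀ x, φ (f x) = g x := by
  have hker : LinearMap.ker f ≤ LinearMap.ker g := fun x hx => by
    simpa [LinearMap.mem_ker.mp hx] using h x
  obtain ⟨φ₀, hφ₀⟩ := f.exists_comp_rangeRestrict_eq_of_ker_le g hker
  have hbound : ∀ y, ‖φ₀ y‖ ≤ C * ‖y‖ := by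
    intro y
    obtain ⟨x, rfl⟩ := f.surjective_rangeRestrict y
    simpa [hφ₀] using h x
  obtain ⟨φ, hφ, -⟩ := exists_extension_norm_eq _ (φ₀.mkContinuous C hbound)
  exact ⟨φ, fun x => (hφ (f.rangeRestrict x)).trans (hφ₀ x)⟩

namespace ContinuousLinearMap

theorem exists_eq_comp_of_injective_of_range_subset
    {𝕜 E F G : Type*} [NontriviallyNormedField 𝕜]
    [NormedAddCommGroup E] [NormedSpace 𝕜 E] [CompleteSpace E]
    [NormedAddCommGroup F] [NormedSpace 𝕜 F]
    [NormedAddCommGroup G] [NormedSpace 𝕜 G] [CompleteSpace G]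
    (X : E →L[𝕜] F) (Y : G →L[𝕜] F) (hY : Function.Injective Y) (h : range X ⊆ range Y) :
    ∃ Z : E →L[𝕜] G, X = Y.comp Z := by
  let e := LinearEquiv.ofInjective (Y : G →ₗ[𝕜] F) hY
  let X' := (X : E →ₗ[𝕜] F).codRestrict (LinearMap.range (Y : G →ₗ[𝕜] F)) fun x => h ⟨x, rfl⟩
  let Z : E →ₗ[𝕜] G := e.symm.toLinearMap ∘ₗ X'
  have hYZ : ∀ x, Y (Z x) = X x := fun x =>
    congrArg Subtype.val (e.apply_symm_apply (X' x))
  have hgraph : (Z.graph : Set (E × G)) = {p | Y p.2 = X p.1} := by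
    ext p
    simp only [SetLike.mem_coe, LinearMap.mem_graph_iff, mem_ofPred_eq]
    exact ⟨fun hp => hp ▸ hYZ p.1, fun hp => hY (hp.trans (hYZ p.1).symm)⟩
  have hZ : Continuous Z := Z.continuous_of_isClosed_graph <| hgraph ▸
    isClosed_eq (by fun_prop) (by fun_prop)
  exact ⟨⟨Z, hZ⟩, ext fun x => (hYZ x).symm⟩

section Restriction

variable {𝕜 E F G : Type*} [RCLike 𝕜]
  [NormedAddCommGroup G] [InnerProductSpace 𝕜 G]
  [NormedAddCommGroup F] [NormedSpace 𝕜 F]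

theorem injective_comp_orthogonal_ker_subtypeL (Y : G →L[𝕜] F) :
    Function.Injective (Y.comp Y.kerᗮ.subtypeL) := by
  refine (injective_iff_map_eq_zero _).mpr fun k hk => ?_
  have hmem : (k : G) ∈ Y.ker ⊓ Y.kerᗮ := ⟨hk, k.2⟩
  simpa [Submodule.inf_orthogonal_eq_bot] using hmem

theorem range_comp_orthogonal_ker_subtypeL [CompleteSpace G] (Y : G →L[𝕜] F) :
    range (Y.comp Y.kerᗮ.subtypeL) = range Y := by
  refine (range_comp_subset_range Y.kerᗮ.subtypeL Y).antisymm ?_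
  rintro _ ⟨w, rfl⟩
  obtain ⟨u, hu, v, hv, rfl⟩ := Y.ker.exists_add_mem_mem_orthogonal w
  have hYu : Y u = 0 := hu
  exact ⟨⟨v, hv⟩, by simp [hYu]⟩

theorem exists_eq_comp_of_range_subset [NormedAddCommGroup E] [NormedSpace 𝕜 E] [CompleteSpace E]
    [CompleteSpace G] (X : E →L[𝕜] F) (Y : G →L[𝕜] F) (h : range X ⊆ range Y) :
    ∃ Z : E →L[𝕜] G, X = Y.comp Z := by
  obtain ⟨Z, hZ⟩ := X.exists_eq_comp_of_injective_of_range_subset _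
    (injective_comp_orthogonal_ker_subtypeL Y) (h.trans (range_comp_orthogonal_ker_subtypeL Y).ge)
  exact ⟨Y.kerᗮ.subtypeL.comp Z, hZ⟩

end Restriction

variable {𝕜 E F G : Type*} [RCLike 𝕜]
  [NormedAddCommGroup E] [InnerProductSpace 𝕜 E] [CompleteSpace E]
  [NormedAddCommGroup F] [InnerProductSpace 𝕜 F] [CompleteSpace F]
  [NormedAddCommGroup G] [InnerProductSpace 𝕜 G] [CompleteSpace G]

theorem norm_adjoint_comp_apply_le (Y : G →L[𝕜] F) (Z : E →L[𝕜] G) (z : F) :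
    ‖adjoint (Y.comp Z) z‖ ≤ ‖Z‖ * ‖adjoint Y z‖ := by
  simpa [adjoint_comp] using (adjoint Z).le_opNorm (adjoint Y z)

theorem range_subset_range_of_norm_adjoint_le (X : E →L[𝕜] F) (Y : G →L[𝕜] F) (c : ℝ)
    (hc : ∀ z, ‖adjoint X z‖ ≤ c * ‖adjoint Y z‖) : range X ⊆ range Y := by
  rintro _ ⟨x, rfl⟩
  have hbound : ∀ z, ‖innerSL 𝕜 (X x) z‖ ≤ (c * ‖x‖) * ‖adjoint Y z‖ := fun z =>
    calc ‖innerSL 𝕜 (X x) z‖ = ‖⟪x, adjoint X z⟫_𝕜‖ := by simp [adjoint_inner_right]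
      _ ≤ ‖x‖ * ‖adjoint X z‖ := norm_inner_le_norm _ _
      _ ≤ ‖x‖ * (c * ‖adjoint Y z‖) := by gcongr; exact hc z
      _ = (c * ‖x‖) * ‖adjoint Y z‖ := by ring
  obtain ⟨φ, hφ⟩ := LinearMap.exists_strongDual_comp_eq_of_norm_le
    (adjoint Y : F →ₗ[𝕜] G) (innerSL 𝕜 (X x) : F →ₗ[𝕜] 𝕜) _ hbound
  refine ⟨(InnerProductSpace.toDual 𝕜 G).symm φ, ext_inner_right 𝕜 fun z => ?_⟩
  rw [← adjoint_inner_right, InnerProductSpace.toDual_symm_apply]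
  simpa using hφ z

end ContinuousLinearMap

theorem douglas_factorization
    {H₁ H₂ H₃ : Type*}
    [NormedAddCommGroup H₁] [InnerProductSpace ℂ H₁] [CompleteSpace H₁]
    [NormedAddCommGroup H₂] [InnerProductSpace ℂ H₂] [CompleteSpace H₂]
    [NormedAddCommGroup H₃] [InnerProductSpace ℂ H₃] [CompleteSpace H₃]
    (X : H₁ →L[ℂ] H₃) (Y : H₂ →L[ℂ] H₃) :
    (Set.range X ⊆ Set.range Y ↔
      ∃ c : ℝ, 0 < c ∧ ∀ z : H₃,
        ‖ContinuousLinearMap.adjoint X z‖ ≤ c * ‖ContinuousLinearMap.adjoint Y z‖) ∧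
    (Set.range X ⊆ Set.range Y ↔
      ∃ Z : H₁ →L[ℂ] H₂, X = Y.comp Z) := by
  have factor_of_range := X.exists_eq_comp_of_range_subset Y
  refine ⟨⟨fun h => ?_, fun ⟨c, _, hc⟩ => X.range_subset_range_of_norm_adjoint_le Y c hc⟩,
    ⟨factor_of_range, ?_⟩⟩
  · obtain ⟨Z, rfl⟩ := factor_of_range h
    exact ⟨‖Z‖ + 1, by positivity, fun z =>
      (Y.norm_adjoint_comp_apply_le Z z).trans (by gcongr; linarith)⟩
  · rintro ⟨Z, rfl⟩
    exact range_comp_subset_range Z Y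
end

section
/- If the system is null-controllable in time T, i.e. Ran S(T) ⊆ Ran 𝓑^T, then there exists a bounded linear feedback operator F : H → L²((0,T),U), i.e. a bounded linear operator satisfying S(T) + 𝓑^T ∘ F = 0; moreover F can be chosen so that F u₀ ∈ (Ker 𝓑^T)^⊥ for every u₀ ∈ H. -/
open MeasureTheory Set Filter
open scoped InnerProductSpace Topology ENNReal

/-!
Douglas-type factorization. Restricted to `(ker 𝓑T)ᗮ`, the control map `𝓑T` becomes injective
without losing any of its range, so null-controllability lets us define `F u₀` as the unique
control in `(ker 𝓑T)ᗮ` steering `u₀` to zero, i.e. `𝓑T (F u₀) = -S(T) u₀`. Uniqueness makes `F`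
linear, and injectivity makes its graph closed, so `F` is bounded by the closed graph theorem.
-/

section Factorization

variable {𝕜 E F G : Type*} [RCLike 𝕜]

theorem LinearMap.continuous_of_injective_comp
    [NormedAddCommGroup E] [NormedSpace 𝕜 E] [CompleteSpace E]
    [NormedAddCommGroup F] [NormedSpace 𝕜 F]
    [NormedAddCommGroup G] [NormedSpace 𝕜 G] [CompleteSpace G]
    (C : G →ₗ[𝕜] E) (A : E →L[𝕜] F) (hA : Function.Injective A) (hAC : Continuous (A ∘ C)) :
    Continuous C := by
  refine C.continuous_of_isClosed_graph ?_
  have hgraph : (C.graph : Set (G × E)) = {p | A p.2 = A (C p.1)} := by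
    ext p
    simp [LinearMap.mem_graph_iff, hA.eq_iff]
  rw [hgraph]
  exact isClosed_eq (A.continuous.comp continuous_snd) (hAC.comp continuous_fst)

namespace ContinuousLinearMap

variable [NormedAddCommGroup E] [InnerProductSpace 𝕜 E] [NormedAddCommGroup F] [NormedSpace 𝕜 F]

theorem injective_comp_subtypeL_orthogonal_ker (A : E →L[𝕜] F) :
    Function.Injective (A.comp (LinearMap.ker (A : E →ₗ[𝕜] F))ᗮ.subtypeL) := by
  intro x y hxy
  have hmem : (x - y : E) ∈ LinearMap.ker (A : E →ₗ[𝕜] F) := by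
    simpa [sub_eq_zero] using hxy
  have hzero : (x - y : E) ∈ LinearMap.ker (A : E →ₗ[𝕜] F) ⊓ (LinearMap.ker (A : E →ₗ[𝕜] F))ᗮ :=
    ⟨hmem, (x - y).2⟩
  rw [Submodule.inf_orthogonal_eq_bot, Submodule.mem_bot] at hzero
  exact Subtype.ext (sub_eq_zero.mp hzero)

theorem exists_mem_orthogonal_ker_apply_eq [CompleteSpace E] (A : E →L[𝕜] F) (e : E) :
    ∃ z ∈ (LinearMap.ker (A : E →ₗ[𝕜] F))ᗮ, A z = A e := by
  have : CompleteSpace (LinearMap.ker (A : E →ₗ[𝕜] F)) := A.isClosed_ker.completeSpace_coe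
  obtain ⟨y, hy, z, hz, rfl⟩ := (LinearMap.ker (A : E →ₗ[𝕜] F)).exists_add_mem_mem_orthogonal e
  exact ⟨z, hz, by rw [map_add, show A y = 0 from hy, zero_add]⟩

theorem exists_comp_eq_of_range_subset [CompleteSpace E]
    [NormedAddCommGroup G] [NormedSpace 𝕜 G] [CompleteSpace G]
    (A : E →L[𝕜] F) (L : G →L[𝕜] F) (hL : Set.range L ⊆ Set.range A) :
    ∃ C : G →L[𝕜] E, A.comp C = L ∧ ∀ x, C x ∈ (LinearMap.ker (A : E →ₗ[𝕜] F))ᗮ := by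
  have : CompleteSpace (LinearMap.ker (A : E →ₗ[𝕜] F))ᗮ :=
    (LinearMap.ker (A : E →ₗ[𝕜] F)).isClosed_orthogonal.completeSpace_coe
  set K := (LinearMap.ker (A : E →ₗ[𝕜] F))ᗮ
  set A₀ := A.comp K.subtypeL
  have hA₀ : Function.Injective A₀ := A.injective_comp_subtypeL_orthogonal_ker
  have hrange : ∀ x, L x ∈ LinearMap.range (A₀ : K →ₗ[𝕜] F) := by
    intro x
    obtain ⟨e, he⟩ := hL ⟨x, rfl⟩
    obtain ⟨z, hz, hAz⟩ := A.exists_mem_orthogonal_ker_apply_eq e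
    exact ⟨⟨z, hz⟩, hAz.trans he⟩
  set C₀ : G →ₗ[𝕜] K :=
    (LinearEquiv.ofInjective (A₀ : K →ₗ[𝕜] F) hA₀).symm.toLinearMap ∘ₗ
      (L : G →ₗ[𝕜] F).codRestrict _ hrange
  have hA₀C₀ : ∀ x, A₀ (C₀ x) = L x := fun x =>
    congrArg Subtype.val ((LinearEquiv.ofInjective (A₀ : K →ₗ[𝕜] F) hA₀).apply_symm_apply _)
  have hC₀ : Continuous C₀ :=
    C₀.continuous_of_injective_comp A₀ hA₀ <| by
      simpa only [Function.comp_def, hA₀C₀] using L.continuous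
  exact ⟨K.subtypeL.comp ⟨C₀, hC₀⟩, ext hA₀C₀, fun x => (C₀ x).2⟩

end ContinuousLinearMap

end Factorization

theorem null_controllable_implies_bounded_feedback_general
    {H U : Type*}
    [NormedAddCommGroup H] [InnerProductSpace ℂ H] [CompleteSpace H]
    [NormedAddCommGroup U] [InnerProductSpace ℂ U] [CompleteSpace U]
    (T : ℝ)
    (S : ℝ → H →L[ℂ] H)
    (𝓑T : Lp U 2 (volume.restrict (Ioo (0:ℝ) T)) →L[ℂ] H)
    (hnc : Set.range (S T) ⊆ Set.range 𝓑T) :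
    ∃ F : H →L[ℂ] Lp U 2 (volume.restrict (Ioo (0:ℝ) T)),
      S T + 𝓑T.comp F = 0 ∧
      ∀ u₀ : H, F u₀ ∈ (LinearMap.ker (𝓑T : Lp U 2 (volume.restrict (Ioo (0:ℝ) T)) →ₗ[ℂ] H))ᗮ := by
  have hrange : Set.range (-S T) ⊆ Set.range 𝓑T := by
    rintro _ ⟨u₀, rfl⟩
    exact hnc ⟨-u₀, map_neg (S T) u₀⟩
  obtain ⟨F, hF, hFker⟩ := 𝓑T.exists_comp_eq_of_range_subset (-S T) hrange
  exact ⟨F, by rw [hF, add_neg_cancel], hFker⟩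

theorem null_controllable_implies_bounded_feedback
    {H U : Type*}
    [NormedAddCommGroup H] [InnerProductSpace ℂ H] [CompleteSpace H]
    [NormedAddCommGroup U] [InnerProductSpace ℂ U] [CompleteSpace U]
    (a T : ℝ) (hT : 0 < T)
    (S : ℝ → H →L[ℂ] H)
    (hS0 : S 0 = 1)
    (hSsemi : ∀ t s : ℝ, 0 ≤ t → 0 ≤ s → S (t + s) = (S t).comp (S s))
    (hScont : ∀ x : H, ContinuousOn (fun t => S t x) (Ici (0:ℝ)))
    (hSbound : ∀ t : ℝ, 0 ≤ t → ‖S t‖ ≤ Real.exp (-(t * a)))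
    (B : U →L[ℂ] H)
    (𝓑T : Lp U 2 (volume.restrict (Ioo (0:ℝ) T)) →L[ℂ] H)
    (h𝓑T : ∀ f : Lp U 2 (volume.restrict (Ioo (0:ℝ) T)),
      𝓑T f = ∫ s in Ioo (0:ℝ) T, S (T - s) (B (f s)))
    (hnc : Set.range (S T) ⊆ Set.range 𝓑T) :
    ∃ F : H →L[ℂ] Lp U 2 (volume.restrict (Ioo (0:ℝ) T)),
      S T + 𝓑T.comp F = 0 ∧
      ∀ u₀ : H, F u₀ ∈ (LinearMap.ker (𝓑T : Lp U 2 (volume.restrict (Ioo (0:ℝ) T)) →ₗ[ℂ] H))ᗮ :=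
  null_controllable_implies_bounded_feedback_general T S 𝓑T hnc
end
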